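/- arXiv:2402.08808 — 5 statements merged into one kernel-verified Lean document; each statement's English description precedes it below -/
import Mathlib

section
/- Let ψ_n : ℝ → ℝ be the sawtooth function with n cycles on [-1,1] (piecewise linear, ψ_n(-1)=0, alternating between -1 and 1 at the points -1 + (2j-1)/(2n), and zero outside [-1,1]). Then for every t ∈ ℝ, ψ_n(t) = -2n·max(t+1,0) + 2n·max(t-1,0) + 4n·Σ_{j=1}^{n} [(-1)^{j+n+1}·max(t - (2j-1)/(2n), 0) + (-1)^{j+n}·max(t + (2j-1)/(2n), 0)]. -/
open Finset

/-- The sawtooth function `ψ_n : ℝ → ℝ` with `n` cycles on `[-1,1]`: piecewise linear,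
`ψ_n(-1) = 0`, alternating between `-1` and `1` at the points `-1 + (2j-1)/(2n)`, and
zero outside `[-1,1]`.  (Closed form via the distance of `(n(t+1) - 1/2)/2` to the
nearest integer.) -/
noncomputable def sawtooth (n : ℕ) (t : ℝ) : ℝ :=
  if |t| ≤ 1 then
    4 * |((n : ℝ) * (t + 1) - 1 / 2) / 2 - round (((n : ℝ) * (t + 1) - 1 / 2) / 2)| - 1
  else 0


private lemma key (n : ℕ) (hn : 1 ≤ n) (s : ℝ) : ∀ m : ℕ, m ≤ 2*n →
    ∑ j ∈ Finset.Icc 1 n,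
      ((-1:ℝ)^(j+n+1) * (if n + j ≤ m then 2*s - 2*(n:ℝ) - 2*(j:ℝ) + 1 else 0)
        + (-1:ℝ)^(j+n) * (if n + 1 ≤ m + j then 2*s - 2*(n:ℝ) + 2*(j:ℝ) - 1 else 0))
    = s + (-1:ℝ)^(m+1) * (s - (m:ℝ)) := by
  intro m
  induction m with
  | zero =>
    intro _
    rw [Finset.sum_eq_zero]
    · simp
    · intro j hj
      simp only [Finset.mem_Icc] at hj
      rw [if_neg (by omega), if_neg (by omega)]
      ring
  | succ m ih =>
    intro hm
    have ihm := ih (by omega)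
    have hdiff :
        (∑ j ∈ Finset.Icc 1 n,
          ((-1:ℝ)^(j+n+1) * (if n + j ≤ m + 1 then 2*s - 2*(n:ℝ) - 2*(j:ℝ) + 1 else 0)
            + (-1:ℝ)^(j+n) * (if n + 1 ≤ m + 1 + j then 2*s - 2*(n:ℝ) + 2*(j:ℝ) - 1 else 0)))
        - (∑ j ∈ Finset.Icc 1 n,
          ((-1:ℝ)^(j+n+1) * (if n + j ≤ m then 2*s - 2*(n:ℝ) - 2*(j:ℝ) + 1 else 0)
            + (-1:ℝ)^(j+n) * (if n + 1 ≤ m + j then 2*s - 2*(n:ℝ) + 2*(j:ℝ) - 1 else 0)))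
        = (-1:ℝ)^m * (2*s - 2*(m:ℝ) - 1) := by
      rw [← Finset.sum_sub_distrib]
      rcases lt_or_ge m n with hc | hc
      · rw [Finset.sum_eq_single_of_mem (n - m) (Finset.mem_Icc.mpr ⟨by omega, by omega⟩)]
        · rw [if_neg (by omega), if_pos (by omega), if_neg (by omega), if_neg (by omega)]
          have hsign : (-1:ℝ)^(n - m + n) = (-1:ℝ)^m := by
            rw [show n - m + n = 2*(n-m) + m by omega, pow_add, pow_mul, neg_one_sq, one_pow,
              one_mul]
          rw [hsign]
          push_cast [Nat.cast_sub hc.le]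
          ring
        · intro j hj hne
          simp only [Finset.mem_Icc] at hj
          rw [if_congr (show (n + j ≤ m + 1) ↔ (n + j ≤ m) by omega) rfl rfl,
            if_congr (show (n + 1 ≤ m + 1 + j) ↔ (n + 1 ≤ m + j) by omega) rfl rfl]
          ring
      · rw [Finset.sum_eq_single_of_mem (m + 1 - n) (Finset.mem_Icc.mpr ⟨by omega, by omega⟩)]
        · rw [if_pos (by omega), if_pos (by omega), if_neg (by omega), if_pos (by omega)]
          have hsign : (-1:ℝ)^(m + 1 - n + n + 1) = (-1:ℝ)^m := by
            rw [show m + 1 - n + n + 1 = m + 2 by omega, pow_add, neg_one_sq, mul_one]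
          rw [hsign]
          push_cast [Nat.cast_sub (show n ≤ m + 1 by omega)]
          ring
        · intro j hj hne
          simp only [Finset.mem_Icc] at hj
          rw [if_congr (show (n + j ≤ m + 1) ↔ (n + j ≤ m) by omega) rfl rfl,
            if_congr (show (n + 1 ≤ m + 1 + j) ↔ (n + 1 ≤ m + j) by omega) rfl rfl]
          ring
    push_cast
    push_cast at ihm hdiff
    linear_combination hdiff + ihm


private lemma saw_aux (s : ℝ) (m : ℕ) (h1 : (m:ℝ) - 1/2 ≤ s) (h2 : s < (m:ℝ) + 1/2) :
    4 * |(s - 1/2)/2 - round ((s - 1/2)/2)| - 1 = 2 * (-1:ℝ)^(m+1) * (s - (m:ℝ)) := by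
  rcases Nat.even_or_odd m with ⟨k, hk⟩ | ⟨k, hk⟩
  · subst hk
    have hk1 : ((k + k : ℕ) : ℝ) = 2*(k:ℝ) := by push_cast; ring
    rw [hk1] at h1 h2 ⊢
    have hr : round ((s - 1/2)/2) = (k:ℤ) := by
      rw [round_eq]
      refine Int.floor_eq_iff.mpr ⟨?_, ?_⟩ <;> push_cast <;> linarith
    have hp : (-1:ℝ)^(k + k + 1) = -1 := Odd.neg_one_pow ⟨k, by ring⟩
    rw [hr, hp, abs_of_nonpos (by push_cast; linarith)]
    push_cast
    ring_nf
  · subst hk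
    have hk1 : ((2*k + 1 : ℕ) : ℝ) = 2*(k:ℝ) + 1 := by push_cast; ring
    rw [hk1] at h1 h2 ⊢
    have hr : round ((s - 1/2)/2) = (k:ℤ) := by
      rw [round_eq]
      refine Int.floor_eq_iff.mpr ⟨?_, ?_⟩ <;> push_cast <;> linarith
    have hp : (-1:ℝ)^(2*k + 1 + 1) = 1 := Even.neg_one_pow ⟨k+1, by ring⟩
    rw [hr, hp, abs_of_nonneg (by push_cast; linarith)]
    push_cast
    ring_nf

private lemma rhs_eq (n m : ℕ) (t : ℝ) (hn : 1 ≤ n) (hm : m ≤ 2*n)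
    (h1 : (m:ℝ) - 1/2 ≤ (n:ℝ)*(t+1)) (h2 : m < 2*n → (n:ℝ)*(t+1) < (m:ℝ) + 1/2) :
    4 * (n:ℝ) * ∑ j ∈ Finset.Icc 1 n,
        ((-1 : ℝ) ^ (j + n + 1) * max (t - (2 * (j:ℝ) - 1) / (2 * (n:ℝ))) 0
          + (-1 : ℝ) ^ (j + n) * max (t + (2 * (j:ℝ) - 1) / (2 * (n:ℝ))) 0)
    = 2 * ((n:ℝ)*(t+1)) + 2 * (-1:ℝ)^(m+1) * ((n:ℝ)*(t+1) - (m:ℝ)) := by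
  have hn0 : (0:ℝ) < n := by exact_mod_cast Nat.pos_of_ne_zero (by omega)
  have hstep : ∀ j ∈ Finset.Icc 1 n,
      ((-1 : ℝ) ^ (j + n + 1) * max (t - (2 * (j:ℝ) - 1) / (2 * (n:ℝ))) 0
        + (-1 : ℝ) ^ (j + n) * max (t + (2 * (j:ℝ) - 1) / (2 * (n:ℝ))) 0)
      = (1/(2*(n:ℝ))) *
        ((-1:ℝ)^(j+n+1) * (if n + j ≤ m then 2*((n:ℝ)*(t+1)) - 2*(n:ℝ) - 2*(j:ℝ) + 1 else 0)
          + (-1:ℝ)^(j+n) * (if n + 1 ≤ m + j then 2*((n:ℝ)*(t+1)) - 2*(n:ℝ) + 2*(j:ℝ) - 1 else 0)) := by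
    intro j hj
    simp only [Finset.mem_Icc] at hj
    have hj1 : (1:ℝ) ≤ j := by exact_mod_cast hj.1
    have hj2 : (j:ℝ) ≤ n := by exact_mod_cast hj.2
    have hcc : (2*(j:ℝ)-1)/(2*(n:ℝ)) * (2*(n:ℝ)) = 2*(j:ℝ)-1 := by field_simp
    have e1 : max (t - (2 * (j:ℝ) - 1) / (2 * (n:ℝ))) 0
        = if n + j ≤ m then t - (2 * (j:ℝ) - 1) / (2 * (n:ℝ)) else 0 := by
      by_cases hc : n + j ≤ m
      · rw [if_pos hc]
        have hcm : ((n:ℝ) + j) ≤ m := by exact_mod_cast hc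
        exact max_eq_left (by nlinarith)
      · rw [if_neg hc]
        have hs' := h2 (by omega)
        have hcm : (m:ℝ) + 1 ≤ (n:ℝ) + j := by exact_mod_cast (show m + 1 ≤ n + j by omega)
        exact max_eq_right (by nlinarith)
    have e2 : max (t + (2 * (j:ℝ) - 1) / (2 * (n:ℝ))) 0
        = if n + 1 ≤ m + j then t + (2 * (j:ℝ) - 1) / (2 * (n:ℝ)) else 0 := by
      by_cases hc : n + 1 ≤ m + j
      · rw [if_pos hc]
        have hcm : (n:ℝ) + 1 ≤ (m:ℝ) + j := by exact_mod_cast hc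
        exact max_eq_left (by nlinarith)
      · rw [if_neg hc]
        have hs' := h2 (by omega)
        have hcm : (m:ℝ) + (j:ℝ) ≤ n := by exact_mod_cast (show m + j ≤ n by omega)
        exact max_eq_right (by nlinarith)
    rw [e1, e2]
    split_ifs <;> field_simp <;> ring
  rw [Finset.sum_congr rfl hstep, ← Finset.mul_sum, key n hn ((n:ℝ)*(t+1)) m hm]
  field_simp
  ring

/-- The sawtooth function with `n` cycles equals an explicit depth-2 ReLU network:
`ψ_n(t) = -2n·[t+1]₊ + 2n·[t-1]₊
  + 4n·Σ_{j=1}^{n} ((-1)^{j+n+1}·[t - (2j-1)/(2n)]₊ + (-1)^{j+n}·[t + (2j-1)/(2n)]₊)`. -/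
theorem sawtooth_eq_relu_sum (n : ℕ) (hn : 1 ≤ n) (t : ℝ) :
    sawtooth n t =
      -(2 * n) * max (t + 1) 0 + (2 * n) * max (t - 1) 0
        + 4 * n * ∑ j ∈ Finset.Icc 1 n,
            ((-1 : ℝ) ^ (j + n + 1) * max (t - (2 * j - 1) / (2 * n)) 0
              + (-1 : ℝ) ^ (j + n) * max (t + (2 * j - 1) / (2 * n)) 0) := by
  have hn0 : (0:ℝ) < n := by exact_mod_cast Nat.pos_of_ne_zero (by omega)
  rcases lt_or_ge t (-1) with hlt | hge
  · have hsaw : sawtooth n t = 0 := by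
      simp only [sawtooth]
      rw [if_neg (by rw [abs_le]; push_neg; intro h; linarith)]
    have hz : ∑ j ∈ Finset.Icc 1 n,
        ((-1 : ℝ) ^ (j + n + 1) * max (t - (2 * (j:ℝ) - 1) / (2 * (n:ℝ))) 0
          + (-1 : ℝ) ^ (j + n) * max (t + (2 * (j:ℝ) - 1) / (2 * (n:ℝ))) 0) = 0 := by
      refine Finset.sum_eq_zero ?_
      intro j hj
      simp only [Finset.mem_Icc] at hj
      have hj1 : (1:ℝ) ≤ j := by exact_mod_cast hj.1
      have hj2 : (j:ℝ) ≤ n := by exact_mod_cast hj.2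
      have hcc : (2*(j:ℝ)-1)/(2*(n:ℝ)) * (2*(n:ℝ)) = 2*(j:ℝ)-1 := by field_simp
      rw [max_eq_right (by nlinarith), max_eq_right (by nlinarith)]
      ring
    rw [hsaw, hz, max_eq_right (by linarith), max_eq_right (by linarith)]
    ring
  · have hr0 : (0:ℤ) ≤ round ((n:ℝ)*(t+1)) := by
      rw [round_eq]
      refine Int.le_floor.mpr ?_
      push_cast
      nlinarith
    set M : ℕ := min (round ((n:ℝ)*(t+1))).toNat (2*n) with hM
    have hMle : M ≤ 2*n := min_le_right _ _
    have hcast : ((round ((n:ℝ)*(t+1))).toNat : ℤ) = round ((n:ℝ)*(t+1)) :=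
      Int.toNat_of_nonneg hr0
    have hflo : (round ((n:ℝ)*(t+1)) : ℝ) - 1/2 ≤ (n:ℝ)*(t+1) := by
      rw [round_eq]
      have := Int.floor_le ((n:ℝ)*(t+1) + 1/2)
      linarith
    have hfhi : (n:ℝ)*(t+1) < (round ((n:ℝ)*(t+1)) : ℝ) + 1/2 := by
      rw [round_eq]
      have := Int.lt_floor_add_one ((n:ℝ)*(t+1) + 1/2)
      push_cast at this ⊢
      linarith
    have h1 : (M:ℝ) - 1/2 ≤ (n:ℝ)*(t+1) := by
      have hMr : (M:ℤ) ≤ round ((n:ℝ)*(t+1)) := by omega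
      have h' : ((M:ℤ):ℝ) ≤ (round ((n:ℝ)*(t+1)) : ℝ) := by exact_mod_cast hMr
      push_cast at h'
      linarith
    have h2 : M < 2*n → (n:ℝ)*(t+1) < (M:ℝ) + 1/2 := by
      intro hlt'
      have hMeq : (M:ℤ) = round ((n:ℝ)*(t+1)) := by omega
      have h' : ((M:ℤ):ℝ) = (round ((n:ℝ)*(t+1)) : ℝ) := by exact_mod_cast hMeq
      push_cast at h'
      linarith
    have hRHS := rhs_eq n M t hn hMle h1 h2
    rcases le_or_gt t 1 with hle | hgt
    · have habs : |t| ≤ 1 := abs_le.mpr ⟨by linarith, hle⟩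
      have h2' : (n:ℝ)*(t+1) < (M:ℝ) + 1/2 := by
        by_cases hc : M < 2*n
        · exact h2 hc
        · have hMeq : M = 2*n := by omega
          have hs2 : (n:ℝ)*(t+1) ≤ 2*n := by nlinarith
          rw [hMeq]
          push_cast
          linarith
      have hsaw : sawtooth n t
          = 4 * |((n:ℝ)*(t+1) - 1/2)/2 - round (((n:ℝ)*(t+1) - 1/2)/2)| - 1 := by
        simp only [sawtooth, if_pos habs]
      rw [hsaw, saw_aux ((n:ℝ)*(t+1)) M h1 h2', max_eq_left (by linarith),
        max_eq_right (by linarith), hRHS]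
      ring
    · have hMeq : M = 2*n := by
        have h2s : (2*(n:ℤ)) ≤ round ((n:ℝ)*(t+1)) := by
          rw [round_eq]
          refine Int.le_floor.mpr ?_
          push_cast
          nlinarith
        omega
      have hsaw : sawtooth n t = 0 := by
        simp only [sawtooth]
        rw [if_neg (by rw [abs_le]; push_neg; intro h; linarith)]
      rw [hsaw, max_eq_left (by linarith), max_eq_left (by linarith), hRHS, hMeq]
      have hp : (-1:ℝ)^(2*n+1) = -1 := Odd.neg_one_pow ⟨n, by ring⟩
      rw [hp]
      push_cast
      ring
end

section
/- For all s > 0 and positive integers K, define f(t) = (2s/K)·Σ_{k=1}^{K} (max(t - sk/K, 0) + max(-t - sk/K, 0)). Then sup_{t ∈ [-s,s]} |f(t) - t²| ≤ s²(1/K + 1/K²). -/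
open Finset

lemma gauss_Icc_real (m : ℕ) : ∑ k ∈ Finset.Icc 1 m, (k : ℝ) = m * (m + 1) / 2 := by
  induction m with
  | zero => simp
  | succ n ih =>
    rw [Finset.sum_Icc_succ_top (by omega), ih]
    push_cast
    ring

lemma relu_approx_square_aux (s : ℝ) (hs : 0 < s) (K : ℕ) (hK : 0 < K) (t : ℝ)
    (ht0 : 0 ≤ t) (ht1 : t ≤ s) :
    |((2 * s / K) * ∑ k ∈ Finset.Icc 1 K,
        (max (t - s * k / K) 0 + max (-t - s * k / K) 0)) - t ^ 2|
      ≤ s ^ 2 * (1 / K + 1 / (K : ℝ) ^ 2) := by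
  have hKpos : (0 : ℝ) < K := by exact_mod_cast hK
  set m : ℕ := ⌊(K : ℝ) * t / s⌋₊ with hm
  have hm_le : (m : ℝ) ≤ (K : ℝ) * t / s := Nat.floor_le (by positivity)
  have hm_lt : (K : ℝ) * t / s < m + 1 := Nat.lt_floor_add_one _
  have hmK : m ≤ K := by
    have h1 : (K : ℝ) * t / s ≤ K := by
      rw [div_le_iff₀ hs]
      nlinarith
    have := Nat.floor_mono h1
    simpa using this
  -- lower bound on t for k ≤ m, upper bound for k > m
  have hsum : (∑ k ∈ Finset.Icc 1 K, (max (t - s * k / K) 0 + max (-t - s * k / K) 0))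
      = ∑ k ∈ Finset.Icc 1 m, (t - s * k / K) := by
    rw [← Finset.sum_subset (Finset.Icc_subset_Icc_right hmK)]
    · apply Finset.sum_congr rfl
      intro k hk
      simp only [Finset.mem_Icc] at hk
      have hk1 : (1 : ℝ) ≤ k := by exact_mod_cast hk.1
      have hkm : (k : ℝ) ≤ m := by exact_mod_cast hk.2
      have h1 : s * k / K ≤ t := by
        rw [div_le_iff₀ hKpos]
        have : (k : ℝ) * s ≤ (K : ℝ) * t := by
          have := hm_le
          rw [le_div_iff₀ hs] at this
          nlinarith
        linarith
      have h2 : -t - s * k / K ≤ 0 := by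
        have : (0 : ℝ) ≤ s * k / K := by positivity
        linarith
      rw [max_eq_left (by linarith), max_eq_right h2, add_zero]
    · intro k hk hk'
      simp only [Finset.mem_Icc] at hk hk'
      have hkm : m < k := by omega
      have hkm' : (m : ℝ) + 1 ≤ k := by exact_mod_cast hkm
      have h1 : t - s * k / K ≤ 0 := by
        have ht : t < s * (m + 1) / K := by
          rw [lt_div_iff₀ hKpos]
          have := hm_lt
          rw [div_lt_iff₀ hs] at this
          nlinarith
        have : s * ((m:ℝ) + 1) / K ≤ s * k / K := by gcongr
        linarith
      have h2 : -t - s * k / K ≤ 0 := by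
        have : (0 : ℝ) ≤ s * k / K := by positivity
        linarith
      rw [max_eq_right h1, max_eq_right h2, add_zero]
  have hsum2 : ∑ k ∈ Finset.Icc 1 m, (t - s * k / K)
      = m * t - s * (m * (m + 1)) / (2 * K) := by
    rw [Finset.sum_sub_distrib, Finset.sum_const, Nat.card_Icc]
    have h3 : ∑ k ∈ Finset.Icc 1 m, s * (k : ℝ) / K = s * (m * (m + 1) / 2) / K := by
      rw [← gauss_Icc_real m, Finset.mul_sum, Finset.sum_div]
    rw [h3]
    simp only [Nat.add_sub_cancel, nsmul_eq_mul]
    field_simp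
  rw [hsum, hsum2]
  set M : ℝ := (m : ℝ) with hM
  have hM0 : (0 : ℝ) ≤ M := Nat.cast_nonneg m
  have hMK : M ≤ K := by rw [hM]; exact_mod_cast hmK
  have h1 : M * s ≤ K * t := by
    rw [le_div_iff₀ hs] at hm_le
    linarith
  have h2 : (K : ℝ) * t ≤ (M + 1) * s := by
    rw [div_lt_iff₀ hs] at hm_lt
    nlinarith
  rw [abs_le]
  have hK2 : (0:ℝ) < (K:ℝ)^2 := by positivity
  constructor
  · rw [neg_le, ← sub_nonneg]
    have e1 : s ^ 2 * (1 / K + 1 / (K : ℝ) ^ 2) -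
        -((2 * s / K) * (M * t - s * (M * (M + 1)) / (2 * K)) - t ^ 2)
        = (s^2 * (K + 1) - (((K:ℝ) * t - s * M)^2 + s^2 * M)) / (K:ℝ)^2 := by
      field_simp
      ring
    rw [e1]
    apply div_nonneg _ hK2.le
    have hb1 : (0:ℝ) ≤ (K:ℝ) * t - s * M := by linarith
    have hb2 : (K:ℝ) * t - s * M ≤ s := by linarith
    nlinarith [sq_nonneg ((K:ℝ) * t - s * M)]
  · rw [sub_le_iff_le_add, ← sub_nonneg]
    have e1 : s ^ 2 * (1 / K + 1 / (K : ℝ) ^ 2) + t ^ 2 -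
        (2 * s / K) * (M * t - s * (M * (M + 1)) / (2 * K))
        = ((((K:ℝ) * t - s * M)^2 + s^2 * M) + s^2 * (K + 1)) / (K:ℝ)^2 := by
      field_simp
      ring
    rw [e1]
    apply div_nonneg _ hK2.le
    nlinarith [sq_nonneg ((K:ℝ) * t - s * M)]

/-- For all `s > 0` and positive integers `K`, the sum of `2K` ReLU units
`f(t) = (2s/K)·Σ_{k=1}^{K} (max(t - sk/K, 0) + max(-t - sk/K, 0))` approximates the
square function on `[-s,s]` with error at most `s²(1/K + 1/K²)`. -/
theorem relu_approx_square (s : ℝ) (hs : 0 < s) (K : ℕ) (hK : 0 < K) :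
    ∀ t ∈ Set.Icc (-s) s,
      |((2 * s / K) * ∑ k ∈ Finset.Icc 1 K,
          (max (t - s * k / K) 0 + max (-t - s * k / K) 0)) - t ^ 2|
        ≤ s ^ 2 * (1 / K + 1 / (K : ℝ) ^ 2) := by
  intro t ht
  obtain ⟨ht1, ht2⟩ := ht
  rcases le_or_gt 0 t with h0 | h0
  · exact relu_approx_square_aux s hs K hK t h0 ht2
  · have h := relu_approx_square_aux s hs K hK (-t) (by linarith) (by linarith)
    have heq : (∑ k ∈ Finset.Icc 1 K, (max (-t - s * k / K) 0 + max (-(-t) - s * k / K) 0))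
        = ∑ k ∈ Finset.Icc 1 K, (max (t - s * k / K) 0 + max (-t - s * k / K) 0) := by
      apply Finset.sum_congr rfl
      intro k _
      rw [neg_neg, add_comm]
    rw [heq, neg_pow, ] at h
    simpa using h
end

section
/- Let u₁, u₂ be independent uniformly distributed random points on the unit sphere S^{d-1} ⊆ ℝ^d with d ≥ 3. Then for every η ∈ (0,1), P(‖u₁ - u₂‖₂ ≤ η) < η^{d-1}. -/
/-!
For a fixed unit vector `x`, the probability that a uniform point lies in the cap
`{u : ‖u - x‖ ≤ η} = {u : ⟪x, u⟫ ≥ c}`, `c = 1 - η² / 2`, is the volume of the cone over the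
cap divided by the volume `ω_d` of the unit ball. This cone lies in the solid spherical sector
`{z : ‖z‖ ≤ 1, c ‖z‖ ≤ ⟪x, z⟫}`, whose slice at height `t` is a `(d-1)`-ball of radius
`√(1 - c²) · min (t / c) 1`; hence its volume is at most
`ω_{d-1} √(1 - c²)^{d-1} (1 - c + c / d)`.
Bernoulli's inequality and the log-convexity bound `Γ(x + 1/2)² ≤ x Γ(x)²`, which controls
`ω_{d-1} / ω_d`, show this is less than `η^{d-1} ω_d`. Independence turns the probability into
the average of the cap probability over `u₁`.
-/

open MeasureTheory ProbabilityTheory Metric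

/-- The uniform probability measure on the unit sphere `S^{d-1} ⊆ ℝ^d`, viewed as a
measure on `ℝ^d`. -/
noncomputable def sphereUniform (d : ℕ) : Measure (EuclideanSpace ℝ (Fin d)) :=
  Measure.map Subtype.val
    ((((volume : Measure (EuclideanSpace ℝ (Fin d))).toSphere Set.univ)⁻¹ •
      (volume : Measure (EuclideanSpace ℝ (Fin d))).toSphere))

open Set Real RealInnerProductSpace ENNReal
open scoped Pointwise

theorem ProbabilityTheory.IndepFun.measure_norm_sub_le_eq_lintegral {Ω E : Type*}
    [MeasurableSpace Ω] {P : Measure Ω} [IsFiniteMeasure P]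
    [NormedAddCommGroup E] [MeasurableSpace E] [BorelSpace E] [SecondCountableTopology E]
    {X Y : Ω → E} {μ ν : Measure E} [SFinite ν] (hX : Measurable X) (hY : Measurable Y)
    (hXμ : P.map X = μ) (hYν : P.map Y = ν) (hXY : IndepFun X Y P) (r : ℝ) :
    P {ω | ‖X ω - Y ω‖ ≤ r} = ∫⁻ x, ν (closedBall x r) ∂μ := by
  have hS : MeasurableSet {p : E × E | ‖p.1 - p.2‖ ≤ r} :=
    measurableSet_le (measurable_fst.sub measurable_snd).norm measurable_const
  have hjoint : P.map (fun ω => (X ω, Y ω)) = μ.prod ν := by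
    rw [← hXμ, ← hYν]
    exact (indepFun_iff_map_prod_eq_prod_map_map hX.aemeasurable hY.aemeasurable).1 hXY
  change P ((fun ω => (X ω, Y ω)) ⁻¹' {p | ‖p.1 - p.2‖ ≤ r}) = _
  rw [← Measure.map_apply (hX.prodMk hY) hS, hjoint, Measure.prod_apply hS]
  simp only [closedBall, dist_eq_norm']
  rfl

section Sector

variable {E : Type*} [NormedAddCommGroup E] [InnerProductSpace ℝ E]

def sphericalSector (x : E) (c : ℝ) : Set E := {z | ‖z‖ ≤ 1 ∧ c * ‖z‖ ≤ ⟪x, z⟫}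

theorem measurableSet_sphericalSector [MeasurableSpace E] [OpensMeasurableSpace E]
    (x : E) (c : ℝ) : MeasurableSet (sphericalSector x c) :=
  (isClosed_le continuous_norm continuous_const).inter
    (isClosed_le (continuous_const.mul continuous_norm) (continuous_const.inner continuous_id))
    |>.measurableSet

theorem Ioo_smul_sphere_inter_closedBall_subset {x : E} (hx : ‖x‖ = 1) (η : ℝ) :
    Ioo (0 : ℝ) 1 • (sphere 0 1 ∩ closedBall x η) ⊆ sphericalSector x (1 - η ^ 2 / 2) := by
  rintro _ ⟨r, ⟨hr0, hr1⟩, u, ⟨hu, hux⟩, rfl⟩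
  rw [mem_sphere_zero_iff_norm] at hu
  have hcap : 1 - η ^ 2 / 2 ≤ ⟪x, u⟫ := by
    have hdist : ‖x - u‖ ^ 2 ≤ η ^ 2 := by
      rw [mem_closedBall, dist_eq_norm'] at hux
      exact pow_le_pow_left₀ (norm_nonneg _) hux 2
    rw [norm_sub_sq_real, hx, hu] at hdist
    linarith
  refine ⟨?_, ?_⟩ <;> rw [norm_smul, Real.norm_of_nonneg hr0.le, hu, mul_one]
  · exact hr1.le
  · rw [real_inner_smul_right, mul_comm]
    exact mul_le_mul_of_nonneg_left hcap hr0.le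

theorem volume_sphericalSector_eq_of_norm_eq [FiniteDimensional ℝ E] [MeasurableSpace E]
    [BorelSpace E] {x y : E} (hxy : ‖x‖ = ‖y‖) (c : ℝ) :
    volume (sphericalSector x c) = volume (sphericalSector y c) := by
  set f := Submodule.reflection (ℝ ∙ (x - y))ᗮ
  have hfx : f x = y := Submodule.reflection_sub hxy
  have hpre : f ⁻¹' sphericalSector y c = sphericalSector x c := by
    ext z
    simp only [sphericalSector, mem_preimage, mem_ofPred_eq, LinearIsometryEquiv.norm_map,
      ← hfx, LinearIsometryEquiv.inner_map_map]
  rw [← hpre, f.measurePreserving.measure_preimage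
    (measurableSet_sphericalSector y c).nullMeasurableSet]

end Sector

namespace EuclideanSpace

noncomputable def measurableEquivFinSucc (n : ℕ) :
    EuclideanSpace ℝ (Fin (n + 1)) ≃ᵐ ℝ × EuclideanSpace ℝ (Fin n) :=
  (MeasurableEquiv.toLp 2 _).symm.trans <|
    (MeasurableEquiv.piFinSuccAbove (fun _ => ℝ) 0).trans <|
      .prodCongr (.refl ℝ) (MeasurableEquiv.toLp 2 _)

theorem measurePreserving_measurableEquivFinSucc (n : ℕ) :
    MeasurePreserving (measurableEquivFinSucc n) :=
  (EuclideanSpace.volume_preserving_symm_measurableEquiv_toLp _).trans <|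
    (volume_preserving_piFinSuccAbove (fun _ => ℝ) 0).trans <|
      (MeasurePreserving.id volume).prod (PiLp.volume_preserving_toLp _)

theorem norm_sq_eq_measurableEquivFinSucc {n : ℕ} (z : EuclideanSpace ℝ (Fin (n + 1))) :
    ‖z‖ ^ 2 = z 0 ^ 2 + ‖(measurableEquivFinSucc n z).2‖ ^ 2 := by
  simp only [EuclideanSpace.norm_sq_eq, Fin.sum_univ_succ, Real.norm_eq_abs, sq_abs]
  rfl

end EuclideanSpace

theorem lintegral_Icc_min_div_one_pow_le {c : ℝ} (hc0 : 0 < c) (hc1 : c ≤ 1) (n : ℕ) :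
    ∫⁻ t in Icc (0 : ℝ) 1, ENNReal.ofReal (min (t / c) 1 ^ n) ≤
      ENNReal.ofReal (1 - c + c / (n + 1)) := by
  rw [← Icc_union_Ioc_eq_Icc hc0.le hc1, lintegral_union measurableSet_Ioc
    ((Iic_disjoint_Ioc le_rfl).mono_left Icc_subset_Iic_self)]
  have hIcc : ∫⁻ t in Icc (0 : ℝ) c, ENNReal.ofReal (min (t / c) 1 ^ n) ≤
      ENNReal.ofReal (c / (n + 1)) := by
    calc ∫⁻ t in Icc (0 : ℝ) c, ENNReal.ofReal (min (t / c) 1 ^ n)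
        ≤ ∫⁻ t in Icc (0 : ℝ) c, ENNReal.ofReal ((t / c) ^ n) := by
          refine setLIntegral_mono (by fun_prop) fun t ht => ?_
          gcongr
          · exact le_min (div_nonneg ht.1 hc0.le) zero_le_one
          · exact min_le_left _ _
      _ = ENNReal.ofReal (∫ t in (0 : ℝ)..c, (t / c) ^ n) := by
          rw [intervalIntegral.integral_of_le hc0.le, ← integral_Icc_eq_integral_Ioc,
            ofReal_integral_eq_lintegral_ofReal]
          · exact (by fun_prop : Continuous fun t : ℝ => (t / c) ^ n).integrableOn_Icc
          · filter_upwards [ae_restrict_mem measurableSet_Icc] with t ht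
            exact pow_nonneg (div_nonneg ht.1 hc0.le) n
      _ = ENNReal.ofReal (c / (n + 1)) := by
          simp_rw [div_pow, intervalIntegral.integral_div, integral_pow]
          congr 1
          field_simp
          ring
  have hIoc : ∫⁻ t in Ioc c 1, ENNReal.ofReal (min (t / c) 1 ^ n) ≤ ENNReal.ofReal (1 - c) := by
    calc ∫⁻ t in Ioc c 1, ENNReal.ofReal (min (t / c) 1 ^ n)
        ≤ ∫⁻ _ in Ioc c 1, 1 := by
          refine setLIntegral_mono measurable_const fun t ht => ?_
          rw [ENNReal.ofReal_le_one]
          exact pow_le_one₀ (le_min (div_nonneg (hc0.le.trans ht.1.le) hc0.le) zero_le_one)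
            (min_le_right _ _)
      _ = ENNReal.ofReal (1 - c) := by simp
  calc _ ≤ ENNReal.ofReal (c / (n + 1)) + ENNReal.ofReal (1 - c) := add_le_add hIcc hIoc
    _ = ENNReal.ofReal (1 - c + c / (n + 1)) := by
      rw [add_comm, ← ENNReal.ofReal_add (by linarith) (by positivity)]

theorem Real.Gamma_add_half_sq_le {x : ℝ} (hx : 0 < x) :
    Gamma (x + 1 / 2) ^ 2 ≤ x * Gamma x ^ 2 := by
  have h := Gamma_mul_add_mul_le_rpow_Gamma_mul_rpow_Gamma hx (by linarith : 0 < x + 1)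
    one_half_pos one_half_pos (by norm_num)
  rw [show 1 / 2 * x + 1 / 2 * (x + 1) = x + 1 / 2 by ring, ← Real.sqrt_eq_rpow,
    ← Real.sqrt_eq_rpow, ← Real.sqrt_mul (Gamma_pos_of_pos hx).le, Gamma_add_one hx.ne'] at h
  calc Gamma (x + 1 / 2) ^ 2 ≤ √(Gamma x * (x * Gamma x)) ^ 2 :=
        pow_le_pow_left₀ (Gamma_pos_of_pos (by linarith)).le h 2
    _ = x * Gamma x ^ 2 := by
      rw [Real.sq_sqrt (by have := Gamma_pos_of_pos hx; positivity)]
      ring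

theorem one_sub_pow_mul_one_add_two_mul_sq_lt {α : ℝ} (h0 : 0 ≤ α) (h1 : α ≤ 1 / 4) (n : ℕ) :
    (1 - α) ^ n * (1 + 2 * n * α) ^ 2 < 4 * (n + 1) := by
  have hbern : (1 - α) ^ n * (1 + n * α) ≤ 1 :=
    calc (1 - α) ^ n * (1 + n * α) ≤ (1 - α) ^ n * (1 + α) ^ n := by
          gcongr
          · exact pow_nonneg (by linarith) n
          · exact one_add_mul_le_pow (by linarith) n
      _ = (1 - α ^ 2) ^ n := by rw [← mul_pow]; ring
      _ ≤ 1 := pow_le_one₀ (by nlinarith) (by nlinarith)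
  have hsq : (1 + 2 * n * α) ^ 2 < 4 * (n + 1) * (1 + n * α) := by
    have : 0 ≤ (n : ℝ) * α := by positivity
    nlinarith
  calc (1 - α) ^ n * (1 + 2 * n * α) ^ 2
      < (1 - α) ^ n * (4 * (n + 1) * (1 + n * α)) :=
        mul_lt_mul_of_pos_left hsq (pow_pos (by linarith) n)
    _ = 4 * (n + 1) * ((1 - α) ^ n * (1 + n * α)) := by ring
    _ ≤ 4 * (n + 1) := by
      have : (0:ℝ) ≤ 4 * (n + 1) := by positivity
      nlinarith

/-- `√π ^ n / Γ (n / 2 + 1)` is the volume of the unit ball of `ℝⁿ`. -/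
theorem sphericalSector_bound_lt_pow_mul_ball_volume {n : ℕ} (hn : n ≠ 0) {η : ℝ} (hη0 : 0 < η)
    (hη1 : η ≤ 1) :
    √(1 - (1 - η ^ 2 / 2) ^ 2) ^ n * (1 - (1 - η ^ 2 / 2) + (1 - η ^ 2 / 2) / (n + 1)) *
        (√π ^ n / Gamma (n / 2 + 1)) <
      η ^ n * (√π ^ (n + 1) / Gamma ((n + 1 : ℕ) / 2 + 1)) := by
  set α := η ^ 2 / 4
  have hα0 : 0 ≤ α := by positivity
  have hα1 : α ≤ 1 / 4 := by simp only [α]; nlinarith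
  have hρ : 1 - (1 - η ^ 2 / 2) ^ 2 = η ^ 2 * (1 - α) := by ring
  have hq : 1 - (1 - η ^ 2 / 2) + (1 - η ^ 2 / 2) / (n + 1) = (1 + 2 * n * α) / (n + 1) := by
    field_simp; ring
  set G₁ := Gamma (n / 2 + 1)
  set G₂ := Gamma ((n + 1 : ℕ) / 2 + 1)
  have hG₁ : 0 < G₁ := Gamma_pos_of_pos (by positivity)
  have hG₂ : 0 < G₂ := Gamma_pos_of_pos (by positivity)
  have hGamma : G₂ ^ 2 ≤ (n / 2 + 1) * G₁ ^ 2 := by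
    have := Real.Gamma_add_half_sq_le (x := n / 2 + 1) (by positivity)
    rwa [show (n : ℝ) / 2 + 1 + 1 / 2 = (n + 1 : ℕ) / 2 + 1 by push_cast; ring] at this
  have hkey := one_sub_pow_mul_one_add_two_mul_sq_lt hα0 hα1 n
  have hn1 : (1 : ℝ) ≤ n := Nat.one_le_cast.2 (Nat.pos_of_ne_zero hn)
  suffices h : √(1 - α) ^ n * ((1 + 2 * n * α) / (n + 1)) * G₂ < √π * G₁ by
    rw [hρ, hq, Real.sqrt_mul (sq_nonneg η), Real.sqrt_sq hη0.le, mul_pow]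
    have hc : 0 < η ^ n * √π ^ n / (G₁ * G₂) := by positivity
    calc η ^ n * √(1 - α) ^ n * ((1 + 2 * n * α) / (n + 1)) * (√π ^ n / G₁)
        = η ^ n * √π ^ n / (G₁ * G₂) * (√(1 - α) ^ n * ((1 + 2 * n * α) / (n + 1)) * G₂) := by
          field_simp
      _ < η ^ n * √π ^ n / (G₁ * G₂) * (√π * G₁) := mul_lt_mul_of_pos_left h hc
      _ = η ^ n * (√π ^ (n + 1) / G₂) := by field_simp; ring
  refine lt_of_pow_lt_pow_left₀ 2 (by positivity) ?_
  rw [mul_pow, mul_pow, mul_pow, ← pow_mul, mul_comm n, pow_mul, Real.sq_sqrt (by linarith),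
    Real.sq_sqrt pi_pos.le, div_pow]
  have h1α : 0 ≤ 1 - α := by linarith
  calc (1 - α) ^ n * ((1 + 2 * n * α) ^ 2 / (n + 1) ^ 2) * G₂ ^ 2
      ≤ (1 - α) ^ n * ((1 + 2 * n * α) ^ 2 / (n + 1) ^ 2) * ((n / 2 + 1) * G₁ ^ 2) := by
        gcongr
    _ = (1 - α) ^ n * (1 + 2 * n * α) ^ 2 * ((n + 2) / (2 * (n + 1) ^ 2)) * G₁ ^ 2 := by
        field_simp
    _ < 4 * (n + 1) * ((n + 2) / (2 * (n + 1) ^ 2)) * G₁ ^ 2 := by gcongr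
    _ ≤ π * G₁ ^ 2 := by
      gcongr
      rw [← mul_div_assoc, div_le_iff₀ (by positivity)]
      nlinarith [pi_gt_three]

section SectorVolume

open EuclideanSpace

theorem sphericalSector_single_zero_subset {n : ℕ} {c : ℝ} (hc0 : 0 < c) :
    sphericalSector (single (0 : Fin (n + 1)) (1 : ℝ)) c ⊆ measurableEquivFinSucc n ⁻¹'
      {p | p.1 ∈ Icc 0 1 ∧ p.2 ∈ closedBall 0 (√(1 - c ^ 2) * min (p.1 / c) 1)} := by
  rintro z ⟨hz1, hzc⟩
  rw [inner_single_left, map_one, one_mul] at hzc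
  have hpyth := norm_sq_eq_measurableEquivFinSucc z
  set y := (measurableEquivFinSucc n z).2
  have ht : 0 ≤ z 0 := (mul_nonneg hc0.le (norm_nonneg z)).trans hzc
  have hz0 : z 0 ≤ ‖z‖ := by nlinarith [norm_nonneg y, norm_nonneg z]
  have hy : ‖y‖ ≤ √(1 - c ^ 2) * ‖z‖ := by
    rw [← Real.sqrt_sq (norm_nonneg y), ← Real.sqrt_sq (norm_nonneg z), ← Real.sqrt_mul']
    · apply Real.sqrt_le_sqrt
      nlinarith [mul_le_mul hzc hzc (by positivity) ht]
    · positivity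
  have hzmin : ‖z‖ ≤ min (z 0 / c) 1 := le_min ((le_div_iff₀' hc0).2 hzc) hz1
  refine ⟨⟨ht, hz0.trans hz1⟩, ?_⟩
  rw [mem_closedBall_zero_iff]
  exact hy.trans (mul_le_mul_of_nonneg_left hzmin (Real.sqrt_nonneg _))

theorem volume_sphericalSector_single_zero_le {n : ℕ} {c : ℝ} (hc0 : 0 < c) (hc1 : c ≤ 1) :
    volume (sphericalSector (single (0 : Fin (n + 1)) (1 : ℝ)) c) ≤
      ENNReal.ofReal (√(1 - c ^ 2) ^ n * (1 - c + c / (n + 1))) *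
        volume (ball (0 : EuclideanSpace ℝ (Fin n)) 1) := by
  set ρ := √(1 - c ^ 2)
  set r : ℝ → ℝ := fun t => ρ * min (t / c) 1
  have hr : ∀ t ∈ Icc (0 : ℝ) 1, 0 ≤ r t := fun t ht =>
    mul_nonneg (Real.sqrt_nonneg _) (le_min (div_nonneg ht.1 hc0.le) zero_le_one)
  set S : Set (ℝ × EuclideanSpace ℝ (Fin n)) :=
    {p | p.1 ∈ Icc 0 1 ∧ p.2 ∈ closedBall 0 (r p.1)}
  have hS : MeasurableSet S :=
    (measurable_fst measurableSet_Icc).inter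
      (measurableSet_le (by fun_prop) (by fun_prop))
  have hslice : ∀ t, volume (Prod.mk t ⁻¹' S) = (Icc 0 1).indicator
      (fun t => ENNReal.ofReal (ρ ^ n) * ENNReal.ofReal (min (t / c) 1 ^ n) *
        volume (ball (0 : EuclideanSpace ℝ (Fin n)) 1)) t := by
    intro t
    by_cases ht : t ∈ Icc (0 : ℝ) 1
    · rw [indicator_of_mem ht, show Prod.mk t ⁻¹' S = closedBall 0 (r t) by
        ext; simp only [S, mem_preimage, mem_ofPred_eq, ht, true_and],
        Measure.addHaar_closedBall _ _ (hr t ht), finrank_euclideanSpace_fin, mul_pow,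
        ENNReal.ofReal_mul (pow_nonneg (Real.sqrt_nonneg _) n)]
    · rw [indicator_of_notMem ht, show Prod.mk t ⁻¹' S = ∅ by
        ext; simp only [S, mem_preimage, mem_ofPred_eq, ht, false_and, mem_empty_iff_false],
        measure_empty]
  calc volume (sphericalSector (single (0 : Fin (n + 1)) (1 : ℝ)) c)
      ≤ volume (measurableEquivFinSucc n ⁻¹' S) :=
        measure_mono (sphericalSector_single_zero_subset hc0)
    _ = ∫⁻ t, volume (Prod.mk t ⁻¹' S) := by
      rw [(measurePreserving_measurableEquivFinSucc n).measure_preimage hS.nullMeasurableSet,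
        Measure.volume_eq_prod, Measure.prod_apply hS]
    _ = ENNReal.ofReal (ρ ^ n) * (∫⁻ t in Icc 0 1, ENNReal.ofReal (min (t / c) 1 ^ n)) *
          volume (ball (0 : EuclideanSpace ℝ (Fin n)) 1) := by
      rw [lintegral_congr (fun t => hslice t), lintegral_indicator measurableSet_Icc,
        lintegral_mul_const' _ _ measure_ball_lt_top.ne, lintegral_const_mul' _ _ ofReal_ne_top]
    _ ≤ ENNReal.ofReal (ρ ^ n) * ENNReal.ofReal (1 - c + c / (n + 1)) *
          volume (ball (0 : EuclideanSpace ℝ (Fin n)) 1) := by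
      gcongr
      exact lintegral_Icc_min_div_one_pow_le hc0 hc1 n
    _ = _ := by rw [← ENNReal.ofReal_mul (by positivity)]

theorem volume_sphericalSector_single_zero_lt {n : ℕ} (hn : n ≠ 0) {η : ℝ} (hη0 : 0 < η)
    (hη1 : η ≤ 1) :
    volume (sphericalSector (single (0 : Fin (n + 1)) (1 : ℝ)) (1 - η ^ 2 / 2)) <
      ENNReal.ofReal (η ^ n) * volume (ball (0 : EuclideanSpace ℝ (Fin (n + 1))) 1) := by
  have : Nonempty (Fin n) := ⟨⟨0, Nat.pos_of_ne_zero hn⟩⟩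
  refine (volume_sphericalSector_single_zero_le (by nlinarith) (by nlinarith)).trans_lt ?_
  have hq : 0 ≤ 1 - (1 - η ^ 2 / 2) + (1 - η ^ 2 / 2) / (n + 1) :=
    add_nonneg (by nlinarith) (div_nonneg (by nlinarith) (by positivity))
  simp only [EuclideanSpace.volume_ball, ofReal_one, one_pow, one_mul, Fintype.card_fin]
  rw [← ENNReal.ofReal_mul (by positivity),
    ← ENNReal.ofReal_mul (by positivity), ENNReal.ofReal_lt_ofReal_iff (by positivity)]
  exact sphericalSector_bound_lt_pow_mul_ball_volume hn hη0 hη1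

end SectorVolume

theorem ae_mem_sphere_sphereUniform (d : ℕ) : ∀ᵐ x ∂sphereUniform d, x ∈ sphere 0 1 :=
  (ae_map_iff measurable_subtype_coe.aemeasurable isClosed_sphere.measurableSet).2
    (ae_of_all _ fun x => x.2)

theorem sphereUniform_apply {d : ℕ} (hd : d ≠ 0) {A : Set (EuclideanSpace ℝ (Fin d))}
    (hA : MeasurableSet A) :
    sphereUniform d A =
      volume (Ioo (0 : ℝ) 1 • (sphere 0 1 ∩ A)) /
        volume (ball (0 : EuclideanSpace ℝ (Fin d)) 1) := by
  have hdim : (Module.finrank ℝ (EuclideanSpace ℝ (Fin d)) : ℝ≥0∞) ≠ 0 := by simp [hd]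
  rw [sphereUniform, Measure.map_apply measurable_subtype_coe hA, Measure.smul_apply,
    smul_eq_mul, Measure.toSphere_apply_univ, Measure.toSphere_apply' _ (measurable_subtype_coe hA),
    Subtype.image_preimage_coe, ENNReal.mul_inv (.inl hdim) (.inl (by simp)), mul_mul_mul_comm,
    ENNReal.inv_mul_cancel hdim (by simp), one_mul, div_eq_mul_inv, mul_comm]

theorem sphereUniform_closedBall_le {d : ℕ} (hd : d ≠ 0) {x : EuclideanSpace ℝ (Fin d)}
    (hx : ‖x‖ = 1) (η : ℝ) :
    sphereUniform d (closedBall x η) ≤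
      volume (sphericalSector x (1 - η ^ 2 / 2)) /
        volume (ball (0 : EuclideanSpace ℝ (Fin d)) 1) := by
  rw [sphereUniform_apply hd measurableSet_closedBall]
  gcongr
  exact Ioo_smul_sphere_inter_closedBall_subset hx η

/-- If `u₁, u₂` are independent uniformly distributed random points on the unit sphere
`S^{d-1} ⊆ ℝ^d` with `d ≥ 3`, then for every `η ∈ (0,1)`,
`P(‖u₁ - u₂‖ ≤ η) < η^{d-1}`. -/
theorem prob_close_uniform_sphere_points {Ω : Type*} [MeasureSpace Ω]
    [IsProbabilityMeasure (ℙ : Measure Ω)]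
    (d : ℕ) (hd : 3 ≤ d) (u₁ u₂ : Ω → EuclideanSpace ℝ (Fin d))
    (h₁ : Measurable u₁) (h₂ : Measurable u₂)
    (hlaw₁ : Measure.map u₁ ℙ = sphereUniform d)
    (hlaw₂ : Measure.map u₂ ℙ = sphereUniform d)
    (hindep : IndepFun u₁ u₂ ℙ)
    (η : ℝ) (hη : η ∈ Set.Ioo (0 : ℝ) 1) :
    ℙ {ω | ‖u₁ ω - u₂ ω‖ ≤ η} < ENNReal.ofReal (η ^ (d - 1)) := by
  obtain ⟨n, rfl⟩ : ∃ n, d = n + 1 := ⟨d - 1, by omega⟩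
  obtain ⟨hη0, hη1⟩ := hη
  set μ := sphereUniform (n + 1)
  set e₀ : EuclideanSpace ℝ (Fin (n + 1)) := EuclideanSpace.single 0 1
  set B := volume (sphericalSector e₀ (1 - η ^ 2 / 2)) /
    volume (ball (0 : EuclideanSpace ℝ (Fin (n + 1))) 1)
  have : IsProbabilityMeasure μ := hlaw₁ ▸ Measure.isProbabilityMeasure_map h₁.aemeasurable
  have hcap : ∀ᵐ x ∂μ, μ (closedBall x η) ≤ B := by
    filter_upwards [ae_mem_sphere_sphereUniform (n + 1)] with x hx
    rw [mem_sphere_zero_iff_norm] at hx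
    exact (sphereUniform_closedBall_le (by omega) hx η).trans_eq
      (by rw [volume_sphericalSector_eq_of_norm_eq (y := e₀) (by simp [e₀, hx])])
  calc ℙ {ω | ‖u₁ ω - u₂ ω‖ ≤ η} = ∫⁻ x, μ (closedBall x η) ∂μ :=
        hindep.measure_norm_sub_le_eq_lintegral h₁ h₂ hlaw₁ hlaw₂ η
    _ ≤ ∫⁻ _, B ∂μ := lintegral_mono_ae hcap
    _ = B := by simp
    _ < ENNReal.ofReal (η ^ (n + 1 - 1)) :=
      ENNReal.div_lt_of_lt_mul (volume_sphericalSector_single_zero_lt (by omega) hη0 hη1.le)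
end

section
/- (Maurey/Barron sampling) Let H be a real Hilbert space and G ⊆ H with ‖g‖_H ≤ B for all g ∈ G. If f lies in the convex hull of G (a finite convex combination f = Σ_k γ_k g_k with γ_k ≥ 0, Σ γ_k = 1, g_k ∈ G), then for every m ∈ ℕ there exist g₁, …, g_m ∈ G such that ‖f - (1/m)Σ_{k=1}^m g_k‖_H ≤ B/√m. -/
/-!
Derandomized Maurey sampling. For weights `γ` with mean `f = ∑ γₖ gₖ`, the cross term in
`‖x + (f - gₖ)‖²` averages out, so the `γ`-average of `‖x + (f - gₖ)‖²` is `‖x‖² + V` with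
`V = ∑ γₖ ‖f - gₖ‖² ≤ B²`. Hence, given `g_{σ 1}, …, g_{σ n}`, some next choice `gₖ` makes
`‖(n + 1) f - ∑ g_{σ i} - gₖ‖² ≤ ‖n f - ∑ g_{σ i}‖² + V`, and greedily `‖m f - ∑ g_{σ i}‖² ≤ m V`;
dividing by `m²` gives the bound `B / √m`.
-/

open Finset

theorem Finset.exists_le_sum_mul_of_sum_eq_one {ι : Type*} {s : Finset ι} {w a : ι → ℝ}
    (hw₀ : ∀ i ∈ s, 0 ≤ w i) (hw₁ : ∑ i ∈ s, w i = 1) :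
    ∃ i ∈ s, a i ≤ ∑ i ∈ s, w i * a i := by
  have hinf := inf_le_centerMass (f := a) hw₀ (hw₁ ▸ one_pos)
  obtain ⟨i, hi, hai⟩ := s.exists_mem_eq_inf' (nonempty_of_sum_ne_zero (hw₁ ▸ one_ne_zero)) a
  refine ⟨i, hi, ?_⟩
  simpa only [← hai, centerMass, hw₁, inv_one, smul_eq_mul, one_mul] using hinf

section MaureySampling

variable {ι H : Type*} [Fintype ι] [NormedAddCommGroup H] [InnerProductSpace ℝ H]
  {γ : ι → ℝ} {g : ι → H} {f : H}

theorem sum_mul_norm_add_sub_sq (hγ₁ : ∑ k, γ k = 1) (hf : ∑ k, γ k • g k = f) (x : H) :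
    ∑ k, γ k * ‖x + (f - g k)‖ ^ 2 = ‖x‖ ^ 2 + ∑ k, γ k * ‖f - g k‖ ^ 2 := by
  have hcentered : ∑ k, γ k • (f - g k) = 0 := by
    simp only [smul_sub, sum_sub_distrib, ← sum_smul, hγ₁, one_smul, hf, sub_self]
  have hcross : ∑ k, γ k * inner ℝ x (f - g k) = 0 := by
    simp only [← real_inner_smul_right, ← inner_sum, hcentered, inner_zero_right]
  simp only [norm_add_sq_real, mul_add, sum_add_distrib, ← sum_mul, hγ₁, mul_left_comm _ (2 : ℝ),
    ← mul_sum, hcross]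
  ring

theorem sum_mul_norm_sub_sq_le (hγ₀ : ∀ k, 0 ≤ γ k) (hγ₁ : ∑ k, γ k = 1)
    (hf : ∑ k, γ k • g k = f) {B : ℝ} (hB : ∀ k, ‖g k‖ ≤ B) :
    ∑ k, γ k * ‖f - g k‖ ^ 2 ≤ B ^ 2 := by
  have hsecond : ∑ k, γ k * ‖g k‖ ^ 2 = ‖f‖ ^ 2 + ∑ k, γ k * ‖f - g k‖ ^ 2 := by
    simpa only [neg_add_eq_sub, sub_sub_cancel_left, norm_neg] using sum_mul_norm_add_sub_sq hγ₁ hf (-f)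
  have hbound : ∑ k, γ k * ‖g k‖ ^ 2 ≤ ∑ k, γ k * B ^ 2 := by
    gcongr with k
    · exact hγ₀ k
    · exact hB k
  rw [← sum_mul, hγ₁, one_mul] at hbound
  nlinarith [sq_nonneg ‖f‖]

theorem exists_norm_nsmul_sub_sum_sq_le (hγ₀ : ∀ k, 0 ≤ γ k) (hγ₁ : ∑ k, γ k = 1)
    (hf : ∑ k, γ k • g k = f) (m : ℕ) :
    ∃ σ : Fin m → ι, ‖(m : ℝ) • f - ∑ i, g (σ i)‖ ^ 2 ≤ m * ∑ k, γ k * ‖f - g k‖ ^ 2 := by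
  induction m with
  | zero => exact ⟨Fin.elim0, by simp⟩
  | succ n ih =>
    obtain ⟨σ, hσ⟩ := ih
    set e := (n : ℝ) • f - ∑ i, g (σ i)
    obtain ⟨k, -, hk⟩ := exists_le_sum_mul_of_sum_eq_one (fun k _ ↦ hγ₀ k) hγ₁
      (a := fun k ↦ ‖e + (f - g k)‖ ^ 2)
    refine ⟨Fin.cons k σ, ?_⟩
    have hstep : ((n + 1 : ℕ) : ℝ) • f - ∑ i, g (Fin.cons (α := fun _ ↦ ι) k σ i) =
        e + (f - g k) := by
      simp only [Fin.sum_univ_succ, Fin.cons_zero, Fin.cons_succ, e, Nat.cast_succ, add_smul,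
        one_smul]
      abel
    rw [hstep, Nat.cast_succ]
    rw [sum_mul_norm_add_sub_sq hγ₁ hf] at hk
    linarith

theorem exists_norm_sub_inv_smul_sum_le (hγ₀ : ∀ k, 0 ≤ γ k) (hγ₁ : ∑ k, γ k = 1)
    (hf : ∑ k, γ k • g k = f) {B : ℝ} (hB : ∀ k, ‖g k‖ ≤ B) {m : ℕ} (hm : 0 < m) :
    ∃ σ : Fin m → ι, ‖f - (m : ℝ)⁻¹ • ∑ i, g (σ i)‖ ≤ B / √m := by
  obtain ⟨σ, hσ⟩ := exists_norm_nsmul_sub_sum_sq_le hγ₀ hγ₁ hf m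
  refine ⟨σ, ?_⟩
  obtain ⟨k, -⟩ := exists_ne_zero_of_sum_ne_zero (hγ₁ ▸ one_ne_zero)
  have hB₀ : 0 ≤ B := (norm_nonneg _).trans (hB k)
  have hm₀ : (0 : ℝ) < m := Nat.cast_pos.mpr hm
  have hrescale : f - (m : ℝ)⁻¹ • ∑ i, g (σ i) = (m : ℝ)⁻¹ • ((m : ℝ) • f - ∑ i, g (σ i)) := by
    rw [smul_sub, inv_smul_smul₀ hm₀.ne']
  refine le_of_pow_le_pow_left₀ two_ne_zero (by positivity) ?_
  calc ‖f - (m : ℝ)⁻¹ • ∑ i, g (σ i)‖ ^ 2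
      = (m : ℝ)⁻¹ ^ 2 * ‖(m : ℝ) • f - ∑ i, g (σ i)‖ ^ 2 := by
        rw [hrescale, norm_smul, mul_pow, Real.norm_of_nonneg (by positivity)]
    _ ≤ (m : ℝ)⁻¹ ^ 2 * (m * B ^ 2) := by
        gcongr
        exact hσ.trans (by gcongr; exact sum_mul_norm_sub_sq_le hγ₀ hγ₁ hf hB)
    _ = (B / √m) ^ 2 := by
        rw [div_pow, Real.sq_sqrt hm₀.le]
        field_simp

end MaureySampling

/-- Maurey/Barron sampling: if `f` is a finite convex combination of elements of a
subset `G` of a real Hilbert space `H` with `‖g‖ ≤ B` for all `g ∈ G`, then for every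
`m ≥ 1` there exist `g₁, …, g_m ∈ G` with `‖f - (1/m)Σ g_i‖ ≤ B/√m`. -/
theorem maurey_sampling {H : Type*} [NormedAddCommGroup H] [InnerProductSpace ℝ H]
    (G : Set H) (B : ℝ) (hG : ∀ g ∈ G, ‖g‖ ≤ B)
    {K : ℕ} (γ : Fin K → ℝ) (g : Fin K → H)
    (hγ : ∀ k, 0 ≤ γ k) (hγ1 : ∑ k, γ k = 1) (hg : ∀ k, g k ∈ G)
    (f : H) (hf : f = ∑ k, γ k • g k) :
    ∀ m : ℕ, 0 < m → ∃ gs : Fin m → H, (∀ i, gs i ∈ G) ∧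
      ‖f - (m : ℝ)⁻¹ • ∑ i, gs i‖ ≤ B / Real.sqrt m := by
  intro m hm
  obtain ⟨σ, hσ⟩ :=
    exists_norm_sub_inv_smul_sum_le hγ hγ1 hf.symm (fun k ↦ hG _ (hg k)) hm
  exact ⟨fun i ↦ g (σ i), fun i ↦ hg (σ i), hσ⟩
end

section
/- Let n ≥ 1 and let ψ_n : [-1,1] → [-1,1] be the sawtooth function with n cycles (piecewise linear with slope ±2n, one full cycle on each interval I_i = (-1 + (2i-2)/n, -1 + 2i/n)). If p : ℝ → ℝ is a polynomial of degree at most 2d-1 with n ≥ 2d-1, then ∫_{-1}^{1} (ψ_n(t) - p(t/√d))² dt ≥ (n - 2d + 1)/(3n). -/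
open Finset intervalIntegral
/-!
On the `i`-th cycle `[-1 + 2i/n, -1 + 2(i+1)/n]` the sawtooth is `-tent` on the first half
and `tent` on the second, where `tent` rises linearly from `0` to `1` and back, so that
`∫ tent² = 1/(3n)` over a half-cycle. If `g = p(·/√d)` has one sign on the cycle, then
`ψ_n g ≤ 0` on one of the two halves, where therefore `(ψ_n - g)² ≥ ψ_n²`: the cycle
contributes at least `1/(3n)`. A cycle on which `g` changes sign has a root of `g` in its
interior, and these roots are distinct, so there are at most `deg p ≤ 2d - 1` such cycles.
-/

open Set Polynomial MeasureTheory

lemma UnitAddCircle.norm_coe_intCast_add (k : ℤ) {y : ℝ} (hy : |y| ≤ 1 / 2) :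
    ‖((k + y : ℝ) : UnitAddCircle)‖ = |y| := by
  have hk : ((k + y : ℝ) : UnitAddCircle) = y := by
    rw [AddCircle.coe_add, add_eq_right, AddCircle.coe_eq_zero_iff]
    exact ⟨k, by simp⟩
  rw [hk, AddCircle.norm_coe_eq_abs_iff (p := 1) one_ne_zero, abs_one]
  exact hy

lemma UnitAddCircle.norm_coe_intCast_add_half_add (k : ℤ) {w : ℝ} (hw : |w| ≤ 1 / 2) :
    ‖((k + 1 / 2 + w : ℝ) : UnitAddCircle)‖ = 1 / 2 - |w| := by
  rw [abs_le] at hw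
  rcases le_total w 0 with hw0 | hw0
  · rw [add_assoc, norm_coe_intCast_add k (abs_le.2 ⟨by linarith, by linarith⟩),
      abs_of_nonpos hw0, abs_of_nonneg (by linarith)]
    ring
  · have h := norm_coe_intCast_add (k + 1) (y := w - 1 / 2)
      (abs_le.2 ⟨by linarith, by linarith⟩)
    rw [Int.cast_add, Int.cast_one, abs_of_nonpos (by linarith)] at h
    rw [show (k : ℝ) + 1 / 2 + w = k + 1 + (w - 1 / 2) by ring, h, abs_of_nonneg hw0]
    ring

lemma Polynomial.card_le_natDegree_of_pairwiseDisjoint {R ι : Type*} [CommRing R]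
    [IsDomain R] {p : R[X]} (hp : p ≠ 0) {s : Finset ι} {I : ι → Set R}
    (hI : (s : Set ι).PairwiseDisjoint I) (hroot : ∀ i ∈ s, ∃ x ∈ I i, p.IsRoot x) :
    #s ≤ p.natDegree := by
  classical
  choose! x hxI hx using hroot
  calc #s ≤ #p.roots.toFinset :=
        card_le_card_of_injOn x
          (fun i hi => Multiset.mem_toFinset.2 (mem_roots'.2 ⟨hp, hx i hi⟩))
          fun i hi j hj hij =>
            hI.elim hi hj (not_disjoint_iff.2 ⟨x i, hxI i hi, hij ▸ hxI j hj⟩)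
    _ ≤ Multiset.card p.roots := Multiset.toFinset_card_le _
    _ ≤ p.natDegree := card_roots' p

def NonnegOrNonposOn {α : Type*} (g : α → ℝ) (s : Set α) : Prop :=
  (∀ x ∈ s, 0 ≤ g x) ∨ ∀ x ∈ s, g x ≤ 0

lemma IsPreconnected.exists_eq_zero_of_not_nonnegOrNonposOn {α : Type*} [TopologicalSpace α]
    {s : Set α} (hs : IsPreconnected s) {g : α → ℝ} (hg : ContinuousOn g s)
    (h : ¬NonnegOrNonposOn g s) : ∃ x ∈ s, g x = 0 := by
  simp only [NonnegOrNonposOn, not_or, not_forall, not_le, exists_prop] at h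
  obtain ⟨⟨x, hx, hgx⟩, y, hy, hgy⟩ := h
  exact hs.intermediate_value hx hy hg ⟨hgx.le, hgy.le⟩

lemma card_le_natDegree_of_not_nonnegOrNonposOn {a : ℕ → ℝ} (ha : Monotone a) {p : ℝ[X]}
    {c : ℝ} (hc : c ≠ 0) {s : Finset ℕ}
    (hs : ∀ i ∈ s, ¬NonnegOrNonposOn (fun t => p.eval (t / c)) (Ioo (a i) (a (i + 1)))) :
    #s ≤ p.natDegree := by
  rcases s.eq_empty_or_nonempty with rfl | ⟨i, hi⟩
  · simp
  have hp : p ≠ 0 := by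
    rintro rfl
    exact hs i hi (Or.inl fun t _ => by simp)
  refine card_le_natDegree_of_pairwiseDisjoint hp (I := fun i => (· / c) '' Ioo (a i) (a (i + 1)))
    (fun i _ j _ hij => ?_) fun i hi => ?_
  · exact (disjoint_image_iff (mul_left_injective₀ (inv_ne_zero hc))).2
      (ha.pairwise_disjoint_on_Ioo_succ hij)
  · obtain ⟨t, ht, hpt⟩ := isPreconnected_Ioo.exists_eq_zero_of_not_nonnegOrNonposOn
      (p.continuous.comp (continuous_id.div_const c)).continuousOn (hs i hi)
    exact ⟨t / c, mem_image_of_mem _ ht, hpt⟩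

lemma integral_sq_le_integral_sq_sub_of_mul_nonpos {f g : ℝ → ℝ} {a b : ℝ} (hab : a ≤ b)
    (hf : IntervalIntegrable (fun t => f t ^ 2) volume a b)
    (hfg : IntervalIntegrable (fun t => (f t - g t) ^ 2) volume a b)
    (h : ∀ t ∈ Ioo a b, f t * g t ≤ 0) :
    ∫ t in a..b, f t ^ 2 ≤ ∫ t in a..b, (f t - g t) ^ 2 :=
  integral_mono_on_of_le_Ioo hab hf hfg fun t ht => by nlinarith [h t ht, sq_nonneg (g t)]

lemma integral_one_sub_abs_sq : ∫ x in (-1 : ℝ)..1, (1 - |x|) ^ 2 = 2 / 3 := by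
  have hi : ∀ a b : ℝ, IntervalIntegrable (fun x : ℝ => (1 - |x|) ^ 2) volume a b :=
    fun a b => (by fun_prop : Continuous fun x : ℝ => (1 - |x|) ^ 2).intervalIntegrable a b
  have hl : ∫ x in (-1 : ℝ)..0, (1 - |x|) ^ 2 = ∫ x in (-1 : ℝ)..0, (1 + x) ^ 2 :=
    integral_congr fun x hx => by
      rw [Set.uIcc_of_le (by norm_num)] at hx
      simp [abs_of_nonpos hx.2]
  have hr : ∫ x in (0 : ℝ)..1, (1 - |x|) ^ 2 = ∫ x in (0 : ℝ)..1, (1 - x) ^ 2 :=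
    integral_congr fun x hx => by
      rw [Set.uIcc_of_le zero_le_one] at hx
      simp [abs_of_nonneg hx.1]
  rw [← integral_add_adjacent_intervals (hi (-1) 0) (hi 0 1), hl, hr]
  simp [integral_comp_add_left (fun x => x ^ 2), integral_comp_sub_left (fun x => x ^ 2)]
  norm_num

noncomputable def tent (n : ℕ) (b t : ℝ) : ℝ := 1 - |2 * n * (t - b) - 1|

lemma tent_nonneg {n : ℕ} (hn : n ≠ 0) {b t : ℝ} (ht : t ∈ Icc b (b + 1 / n)) :
    0 ≤ tent n b t := by
  have h : 2 * n * (t - b) ≤ 2 := by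
    calc 2 * n * (t - b) ≤ 2 * n * (1 / n) := by gcongr; linarith [ht.2]
    _ = 2 := by field_simp
  rw [tent, sub_nonneg, abs_le]
  constructor <;> nlinarith [ht.1]

lemma integral_tent_sq {n : ℕ} (hn : n ≠ 0) (b : ℝ) :
    ∫ t in b..b + 1 / n, tent n b t ^ 2 = 1 / (3 * n) := by
  have hsub : ∫ t in b..b + 1 / n, tent n b t ^ 2
      = ∫ t in b..b + 1 / n, (fun x => (1 - |x|) ^ 2) (2 * n * t - (2 * n * b + 1)) :=
    integral_congr fun t _ => by simp only [tent]; ring_nf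
  rw [hsub, integral_comp_mul_sub (fun x => (1 - |x|) ^ 2) (by positivity)]
  have hl : 2 * n * b - (2 * n * b + 1) = (-1 : ℝ) := by ring
  have hr : 2 * n * (b + 1 / n) - (2 * n * b + 1) = (1 : ℝ) := by field_simp; ring
  rw [hl, hr, integral_one_sub_abs_sq, smul_eq_mul]
  field_simp

lemma one_div_three_mul_le_integral_sq_sub_of_sq_eq_tent_sq {n : ℕ} (hn : n ≠ 0)
    {f g : ℝ → ℝ} (hf : Continuous f) (hg : Continuous g) {b : ℝ}
    (hsq : ∀ t ∈ Icc b (b + 1 / n), f t ^ 2 = tent n b t ^ 2)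
    (hfg : ∀ t ∈ Ioo b (b + 1 / n), f t * g t ≤ 0) :
    1 / (3 * n) ≤ ∫ t in b..b + 1 / n, (f t - g t) ^ 2 := by
  have hb : b ≤ b + 1 / n := by simp
  calc 1 / (3 * n) = ∫ t in b..b + 1 / n, tent n b t ^ 2 := (integral_tent_sq hn b).symm
  _ = ∫ t in b..b + 1 / n, f t ^ 2 :=
    integral_congr fun t ht => (hsq t (uIcc_of_le hb ▸ ht)).symm
  _ ≤ ∫ t in b..b + 1 / n, (f t - g t) ^ 2 :=
    integral_sq_le_integral_sq_sub_of_mul_nonpos hb ((hf.pow 2).intervalIntegrable _ _)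
      (((hf.sub hg).pow 2).intervalIntegrable _ _) hfg

noncomputable def periodicSawtooth (n : ℕ) (t : ℝ) : ℝ :=
  4 * ‖((((n : ℝ) * (t + 1) - 1 / 2) / 2 : ℝ) : UnitAddCircle)‖ - 1

lemma continuous_periodicSawtooth (n : ℕ) : Continuous (periodicSawtooth n) :=
  continuous_const.mul ((AddCircle.continuous_mk' 1).comp (by fun_prop)).norm |>.sub
    continuous_const

lemma sawtooth_eq_periodicSawtooth (n : ℕ) {t : ℝ} (ht : |t| ≤ 1) :
    sawtooth n t = periodicSawtooth n t := by
  rw [sawtooth, if_pos ht, periodicSawtooth, UnitAddCircle.norm_eq]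

noncomputable def cycleStart (n i : ℕ) : ℝ := -1 + 2 * i / n

lemma cycleStart_succ (n i : ℕ) :
    cycleStart n (i + 1) = cycleStart n i + 1 / n + 1 / n := by
  simp only [cycleStart]
  push_cast
  ring

lemma monotone_cycleStart (n : ℕ) : Monotone (cycleStart n) := fun i j hij => by
  unfold cycleStart
  gcongr

lemma sum_integral_cycleStart {n : ℕ} (hn : n ≠ 0) {F : ℝ → ℝ} (hF : Continuous F) :
    ∑ i ∈ range n, ∫ t in cycleStart n i..cycleStart n (i + 1), F t =
      ∫ t in (-1 : ℝ)..1, F t := by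
  rw [sum_integral_adjacent_intervals fun i _ => hF.intervalIntegrable _ _]
  congr 1
  · simp [cycleStart]
  · simp only [cycleStart]; field_simp; ring

lemma periodicSawtooth_eq {n : ℕ} (hn : n ≠ 0) (i : ℕ) (t : ℝ) : periodicSawtooth n t =
    4 * ‖(((i : ℤ) + (n * (t - cycleStart n i) - 1 / 2) / 2 : ℝ) : UnitAddCircle)‖ - 1 := by
  rw [periodicSawtooth, cycleStart]
  congr 4
  push_cast
  field_simp
  ring

lemma periodicSawtooth_eq_neg_tent {n : ℕ} (hn : n ≠ 0) (i : ℕ) {t : ℝ}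
    (ht : t ∈ Icc (cycleStart n i) (cycleStart n i + 1 / n)) :
    periodicSawtooth n t = -tent n (cycleStart n i) t := by
  have hn' : (0 : ℝ) < n := by positivity
  have hu0 : 0 ≤ n * (t - cycleStart n i) := mul_nonneg hn'.le (by linarith [ht.1])
  have hu1 : n * (t - cycleStart n i) ≤ 1 := by
    calc n * (t - cycleStart n i) ≤ n * (1 / n : ℝ) := by gcongr; linarith [ht.2]
    _ = 1 := by field_simp
  set u := n * (t - cycleStart n i) with hu
  rw [periodicSawtooth_eq hn i, UnitAddCircle.norm_coe_intCast_add _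
    (abs_le.2 ⟨by linarith, by linarith⟩), tent, abs_div, abs_two, mul_assoc, ← hu,
    show 2 * u - 1 = 2 * (u - 1 / 2) by ring, abs_mul, abs_two]
  ring

lemma periodicSawtooth_eq_tent {n : ℕ} (hn : n ≠ 0) (i : ℕ) {t : ℝ}
    (ht : t ∈ Icc (cycleStart n i + 1 / n) (cycleStart n i + 1 / n + 1 / n)) :
    periodicSawtooth n t = tent n (cycleStart n i + 1 / n) t := by
  have hu1 : 1 ≤ n * (t - cycleStart n i) := by
    calc 1 = n * (1 / n : ℝ) := by field_simp
    _ ≤ n * (t - cycleStart n i) := by gcongr; linarith [ht.1]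
  have hu2 : n * (t - cycleStart n i) ≤ 2 := by
    calc n * (t - cycleStart n i) ≤ n * (1 / n + 1 / n : ℝ) := by gcongr; linarith [ht.2]
    _ = 2 := by field_simp; ring
  set u := n * (t - cycleStart n i) with hu
  have hsplit : ((i : ℤ) + (u - 1 / 2) / 2 : ℝ) = (i : ℤ) + 1 / 2 + (u - 3 / 2) / 2 := by ring
  have htent : 2 * n * (t - (cycleStart n i + 1 / n)) - 1 = 2 * (u - 3 / 2) := by
    rw [hu]; field_simp; ring
  rw [periodicSawtooth_eq hn i, ← hu, hsplit, UnitAddCircle.norm_coe_intCast_add_half_add _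
    (abs_le.2 ⟨by linarith, by linarith⟩), tent, htent, abs_div, abs_mul, abs_two]
  ring

lemma one_div_three_mul_le_integral_sq_sub {n : ℕ} (hn : n ≠ 0) (i : ℕ) {g : ℝ → ℝ}
    (hg : Continuous g)
    (hsign : NonnegOrNonposOn g (Ioo (cycleStart n i) (cycleStart n (i + 1)))) :
    1 / (3 * n) ≤
      ∫ t in cycleStart n i..cycleStart n (i + 1), (periodicSawtooth n t - g t) ^ 2 := by
  have hS := continuous_periodicSawtooth n
  rw [cycleStart_succ] at hsign ⊢
  set a := cycleStart n i
  set m := a + 1 / n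
  have ham : a ≤ m := by simp [m]
  have hmb : m ≤ m + 1 / n := by simp
  have hnonneg : ∀ x y : ℝ, x ≤ y → 0 ≤ ∫ t in x..y, (periodicSawtooth n t - g t) ^ 2 :=
    fun x y hxy => integral_nonneg hxy fun _ _ => sq_nonneg _
  have hint : ∀ x y : ℝ,
      IntervalIntegrable (fun t => (periodicSawtooth n t - g t) ^ 2) volume x y :=
    fun x y => ((hS.sub hg).pow 2).intervalIntegrable x y
  rw [← integral_add_adjacent_intervals (hint a m) (hint m _)]
  rcases hsign with hg0 | hg0
  · have hfirst := one_div_three_mul_le_integral_sq_sub_of_sq_eq_tent_sq hn hS hg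
      (fun t ht => by rw [periodicSawtooth_eq_neg_tent hn i ht, neg_sq])
      fun t ht => mul_nonpos_of_nonpos_of_nonneg
        (by rw [periodicSawtooth_eq_neg_tent hn i (Ioo_subset_Icc_self ht), neg_nonpos]
            exact tent_nonneg hn (Ioo_subset_Icc_self ht))
        (hg0 t (Ioo_subset_Ioo_right hmb ht))
    linarith [hnonneg m (m + 1 / n) hmb]
  · have hsecond := one_div_three_mul_le_integral_sq_sub_of_sq_eq_tent_sq hn hS hg
      (fun t ht => by rw [periodicSawtooth_eq_tent hn i ht])
      fun t ht => mul_nonpos_of_nonneg_of_nonpos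
        (by rw [periodicSawtooth_eq_tent hn i (Ioo_subset_Icc_self ht)]
            exact tent_nonneg hn (Ioo_subset_Icc_self ht))
        (hg0 t (Ioo_subset_Ioo_left ham ht))
    linarith [hnonneg a m ham]

theorem sawtooth_far_from_polynomial_general (n d : ℕ) (hn : 1 ≤ n) (hd : 1 ≤ d)
    (p : Polynomial ℝ) (hp : p.natDegree ≤ 2 * d - 1) :
    ∫ t in (-1 : ℝ)..1, (sawtooth n t - p.eval (t / Real.sqrt d)) ^ 2
      ≥ ((n : ℝ) - 2 * d + 1) / (3 * n) := by
  classical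
  have hn0 : n ≠ 0 := by omega
  set g : ℝ → ℝ := fun t => p.eval (t / Real.sqrt d)
  have hg : Continuous g := p.continuous.comp (continuous_id.div_const _)
  set G := {i ∈ range n | NonnegOrNonposOn g (Ioo (cycleStart n i) (cycleStart n (i + 1)))}
  set B := {i ∈ range n | ¬NonnegOrNonposOn g (Ioo (cycleStart n i) (cycleStart n (i + 1)))}
  have hB : #B ≤ 2 * d - 1 :=
    (card_le_natDegree_of_not_nonnegOrNonposOn (monotone_cycleStart n) (by positivity)
      fun i hi => (mem_filter.1 hi).2).trans hp
  have hG : (n : ℝ) - 2 * d + 1 ≤ #G := by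
    have hsplit : (#G : ℝ) + #B = n := by
      exact_mod_cast (card_range n ▸ card_filter_add_card_filter_not _ : #G + #B = n)
    have hB' : (#B : ℝ) + 1 ≤ 2 * d := by exact_mod_cast (by omega : #B + 1 ≤ 2 * d)
    linarith
  have hF : Continuous fun t => (periodicSawtooth n t - g t) ^ 2 :=
    ((continuous_periodicSawtooth n).sub hg).pow 2
  rw [ge_iff_le]
  calc ((n : ℝ) - 2 * d + 1) / (3 * n) ≤ #G / (3 * n) := by gcongr
  _ = ∑ i ∈ G, 1 / (3 * (n : ℝ)) := by rw [sum_const, nsmul_eq_mul]; ring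
  _ ≤ ∑ i ∈ G, ∫ t in cycleStart n i..cycleStart n (i + 1),
      (periodicSawtooth n t - g t) ^ 2 :=
    sum_le_sum fun i hi => one_div_three_mul_le_integral_sq_sub hn0 i hg (mem_filter.1 hi).2
  _ ≤ ∑ i ∈ range n, ∫ t in cycleStart n i..cycleStart n (i + 1),
      (periodicSawtooth n t - g t) ^ 2 :=
    sum_le_sum_of_subset_of_nonneg (filter_subset _ _) fun i _ _ =>
      integral_nonneg (monotone_cycleStart n i.le_succ) fun _ _ => sq_nonneg _
  _ = ∫ t in (-1 : ℝ)..1, (periodicSawtooth n t - g t) ^ 2 := sum_integral_cycleStart hn0 hF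
  _ = ∫ t in (-1 : ℝ)..1, (sawtooth n t - g t) ^ 2 := integral_congr fun t ht => by
    rw [Set.uIcc_of_le (by norm_num)] at ht
    rw [sawtooth_eq_periodicSawtooth n (abs_le.2 ht)]

/-- If `p` is a polynomial of degree at most `2d-1` and `n ≥ 2d-1`, then
`∫_{-1}^{1} (ψ_n(t) - p(t/√d))² dt ≥ (n - 2d + 1)/(3n)`. -/
theorem sawtooth_far_from_polynomial (n d : ℕ) (hn : 1 ≤ n) (hd : 1 ≤ d)
    (hnd : 2 * d - 1 ≤ n) (p : Polynomial ℝ) (hp : p.natDegree ≤ 2 * d - 1) :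
    ∫ t in (-1 : ℝ)..1, (sawtooth n t - p.eval (t / Real.sqrt d)) ^ 2
      ≥ ((n : ℝ) - 2 * d + 1) / (3 * n) :=
  sawtooth_far_from_polynomial_general n d hn hd p hp
end
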